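/- Mutual replacement individual fairness is separated from strict individual fairness: let D = {i1, i2, j, k} with the proto-metric in which i1 and i2 form one cluster and j and k are singleton clusters (d(i1,i2) = 0, all other distances between distinct doctors equal 1). Let r¹ be the uniform distribution over the two orders i1≻j≻i2≻k and i2≻j≻i1≻k, and let r² be the uniform distribution over the two orders i1≻k≻i2≻j and i2≻j≻i1≻k. Then: (a) r¹ is mutual replacement individually fair with respect to this proto-metric; (b) r¹ is not strictly individually fair with respect to the partition (for the clusters {i1,i2} and {j}, neither cluster is ranked entirely above the other with probability 1); and (c) r² is not mutual replacement individually fair: D_TV(r², (r²)^{i1;i2}) = 1 > 0 = d(i1,i2). -/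

import Mathlib

open Finset

namespace Stmt11

/-! Doctors: `i1 = 0`, `i2 = 1`, `j = 2`, `k = 3`.  A strict linear order on the
doctors is represented by its rank bijection `σ : Fin 4 ≃ Fin 4`, where `σ x` is the
(0-based) rank of doctor `x`: `σ x < σ y` means `x` is ranked above `y`.
Clusters: `{i1, i2}` (cluster `0`), `{j}` (cluster `1`), `{k}` (cluster `2`). -/

/-- The cluster map. -/
def c : Fin 4 → Fin 3 := ![0, 0, 1, 2]

/-- The proto-metric induced by the clusters. -/
noncomputable def dproto : Fin 4 → Fin 4 → ℝ := fun x y => if c x = c y then 0 else 1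

/-- Total variation distance between two distributions over strict linear orders. -/
noncomputable def TVord (r r' : (Fin 4 ≃ Fin 4) → ℝ) : ℝ :=
  (1 / 2) * ∑ σ : Fin 4 ≃ Fin 4, |r σ - r' σ|

/-- The distribution `r^{x;y}` obtained from `r` by swapping the doctors `x` and `y`
in each sampled order. -/
def swapDist (r : (Fin 4 ≃ Fin 4) → ℝ) (x y : Fin 4) : (Fin 4 ≃ Fin 4) → ℝ :=
  fun σ => r ((Equiv.swap x y).trans σ)

/-- `r` is mutual replacement individually fair with respect to the pseudometric `d`. -/
def MutualReplacementIF (d : Fin 4 → Fin 4 → ℝ) (r : (Fin 4 ≃ Fin 4) → ℝ) : Prop :=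
  ∀ x y : Fin 4, TVord r (swapDist r x y) ≤ d x y

/-- A distribution `q` over strict linear orders is *strictly individually fair* with
respect to the cluster map `c` if (i) any two doctors in the same cluster have the same
rank distribution, and (ii) for any two distinct clusters, with probability 1 one of
them is entirely ranked above the other. -/
def StrictIF (q : (Fin 4 ≃ Fin 4) → ℝ) : Prop :=
  (∀ i j : Fin 4, c i = c j → ∀ k : Fin 4,
      (∑ σ : Fin 4 ≃ Fin 4, if σ i = k then q σ else 0) =
        (∑ σ : Fin 4 ≃ Fin 4, if σ j = k then q σ else 0)) ∧
  (∀ k1 k2 : Fin 3, k1 ≠ k2 →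
      (∀ σ : Fin 4 ≃ Fin 4, q σ ≠ 0 → ∀ i j : Fin 4, c i = k1 → c j = k2 → σ i < σ j) ∨
      (∀ σ : Fin 4 ≃ Fin 4, q σ ≠ 0 → ∀ i j : Fin 4, c i = k1 → c j = k2 → σ j < σ i))

/-- The order `i1 ≻ j ≻ i2 ≻ k` (ranks of `(i1, i2, j, k)` are `(0, 2, 1, 3)`). -/
def σa : Fin 4 ≃ Fin 4 := ⟨![0, 2, 1, 3], ![0, 2, 1, 3], by decide, by decide⟩

/-- The order `i2 ≻ j ≻ i1 ≻ k` (ranks of `(i1, i2, j, k)` are `(2, 0, 1, 3)`). -/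
def σb : Fin 4 ≃ Fin 4 := ⟨![2, 0, 1, 3], ![1, 2, 0, 3], by decide, by decide⟩

/-- The order `i1 ≻ k ≻ i2 ≻ j` (ranks of `(i1, i2, j, k)` are `(0, 2, 3, 1)`). -/
def τa : Fin 4 ≃ Fin 4 := ⟨![0, 2, 3, 1], ![0, 3, 1, 2], by decide, by decide⟩

/-- `r¹`: the uniform distribution over the orders `i1 ≻ j ≻ i2 ≻ k` and
`i2 ≻ j ≻ i1 ≻ k`. -/
noncomputable def r1 : (Fin 4 ≃ Fin 4) → ℝ := fun σ =>
  (1 / 2) * (if σ = σa then 1 else 0) + (1 / 2) * (if σ = σb then 1 else 0)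

/-- `r²`: the uniform distribution over the orders `i1 ≻ k ≻ i2 ≻ j` and
`i2 ≻ j ≻ i1 ≻ k`. -/
noncomputable def r2 : (Fin 4 ≃ Fin 4) → ℝ := fun σ =>
  (1 / 2) * (if σ = τa then 1 else 0) + (1 / 2) * (if σ = σb then 1 else 0)

/-! The proto-metric only constrains swaps inside a cluster, and the only nontrivial one is
`i1 ↔ i2`; it exchanges the two orders carrying `r¹`, so `r¹` is invariant under it, while
every other swap is allowed the maximal total variation distance `1`. For `r²`, the same swap
moves both orders of its support outside of it, so `r²` and `(r²)^{i1;i2}` have disjoint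
supports and are at total variation distance `1`. -/

variable {r r' : (Fin 4 ≃ Fin 4) → ℝ}

theorem tvord_self (r : (Fin 4 ≃ Fin 4) → ℝ) : TVord r r = 0 := by
  simp [TVord]

theorem tvord_le_one (hr : ∀ σ, 0 ≤ r σ) (hr' : ∀ σ, 0 ≤ r' σ) (hs : ∑ σ, r σ = 1)
    (hs' : ∑ σ, r' σ = 1) : TVord r r' ≤ 1 := by
  have hpt (σ : Fin 4 ≃ Fin 4) : |r σ - r' σ| ≤ r σ + r' σ := by
    rw [abs_sub_le_iff]; constructor <;> linarith [hr σ, hr' σ]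
  calc TVord r r' ≤ 1 / 2 * ∑ σ, (r σ + r' σ) := by
        unfold TVord; gcongr with σ; exact hpt σ
    _ = 1 := by rw [sum_add_distrib, hs, hs']; norm_num

theorem tvord_eq_one_of_disjoint (hr : ∀ σ, 0 ≤ r σ) (hr' : ∀ σ, 0 ≤ r' σ) (hs : ∑ σ, r σ = 1)
    (hs' : ∑ σ, r' σ = 1) (hdisj : ∀ σ, r σ = 0 ∨ r' σ = 0) : TVord r r' = 1 := by
  have hpt (σ : Fin 4 ≃ Fin 4) : |r σ - r' σ| = r σ + r' σ := by
    rcases hdisj σ with h | h <;> simp [h, abs_of_nonneg, hr σ, hr' σ]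
  rw [TVord, sum_congr rfl fun σ _ => hpt σ, sum_add_distrib, hs, hs']
  norm_num

theorem swap_trans_eq_iff (x y : Fin 4) (σ τ : Fin 4 ≃ Fin 4) :
    (Equiv.swap x y).trans σ = τ ↔ σ = (Equiv.swap x y).trans τ := by
  constructor <;> rintro rfl <;> ext z <;> simp

theorem swapDist_self (r : (Fin 4 ≃ Fin 4) → ℝ) (x : Fin 4) : swapDist r x x = r := by
  funext σ; simp [swapDist]

theorem swapDist_comm (r : (Fin 4 ≃ Fin 4) → ℝ) (x y : Fin 4) :
    swapDist r x y = swapDist r y x := by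
  funext σ; rw [swapDist, swapDist, Equiv.swap_comm]

theorem swapDist_nonneg (hr : ∀ σ, 0 ≤ r σ) (x y : Fin 4) (σ : Fin 4 ≃ Fin 4) :
    0 ≤ swapDist r x y σ :=
  hr _

theorem sum_swapDist (r : (Fin 4 ≃ Fin 4) → ℝ) (x y : Fin 4) :
    ∑ σ, swapDist r x y σ = ∑ σ, r σ :=
  Equiv.sum_comp (Equiv.mulRight (Equiv.swap x y)) r

theorem eq_or_eq_swap_of_c_eq {x y : Fin 4} (h : c x = c y) :
    x = y ∨ (x = 0 ∧ y = 1) ∨ (x = 1 ∧ y = 0) := by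
  revert x y; decide

theorem mutualReplacementIF_dproto_of_swapDist_eq (hr : ∀ σ, 0 ≤ r σ) (hs : ∑ σ, r σ = 1)
    (hswap : swapDist r 0 1 = r) : MutualReplacementIF dproto r := by
  intro x y
  by_cases hc : c x = c y
  · have hxy : swapDist r x y = r := by
      rcases eq_or_eq_swap_of_c_eq hc with rfl | ⟨rfl, rfl⟩ | ⟨rfl, rfl⟩
      · exact swapDist_self r x
      · exact hswap
      · rw [swapDist_comm, hswap]
    simp [dproto, hc, hxy, tvord_self]
  · simpa [dproto, hc] using
      tvord_le_one hr (swapDist_nonneg hr x y) hs ((sum_swapDist r x y).trans hs)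

noncomputable def uniformPair (a b : Fin 4 ≃ Fin 4) : (Fin 4 ≃ Fin 4) → ℝ := fun σ =>
  (1 / 2) * (if σ = a then 1 else 0) + (1 / 2) * (if σ = b then 1 else 0)

section uniformPair

variable (a b : Fin 4 ≃ Fin 4)

theorem uniformPair_nonneg (σ : Fin 4 ≃ Fin 4) : 0 ≤ uniformPair a b σ := by
  unfold uniformPair; positivity

theorem sum_uniformPair : ∑ σ, uniformPair a b σ = 1 := by
  simp only [uniformPair, sum_add_distrib, ← mul_sum, sum_ite_eq', mem_univ, if_true]
  norm_num

theorem uniformPair_comm : uniformPair a b = uniformPair b a := by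
  funext σ; simp only [uniformPair]; ring

theorem eq_or_eq_of_uniformPair_ne_zero {σ : Fin 4 ≃ Fin 4} (h : uniformPair a b σ ≠ 0) :
    σ = a ∨ σ = b := by
  by_contra! hne
  simp [uniformPair, hne.1, hne.2] at h

theorem swapDist_uniformPair (x y : Fin 4) :
    swapDist (uniformPair a b) x y =
      uniformPair ((Equiv.swap x y).trans a) ((Equiv.swap x y).trans b) := by
  funext σ; simp only [swapDist, uniformPair, swap_trans_eq_iff]

theorem tvord_uniformPair_of_disjoint {a' b' : Fin 4 ≃ Fin 4}
    (h : a ≠ a' ∧ a ≠ b' ∧ b ≠ a' ∧ b ≠ b') :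
    TVord (uniformPair a b) (uniformPair a' b') = 1 := by
  refine tvord_eq_one_of_disjoint (uniformPair_nonneg a b) (uniformPair_nonneg a' b')
    (sum_uniformPair a b) (sum_uniformPair a' b') fun σ => ?_
  by_contra! hσ
  rcases eq_or_eq_of_uniformPair_ne_zero a b hσ.1 with rfl | rfl <;>
    rcases eq_or_eq_of_uniformPair_ne_zero a' b' hσ.2 with hσ' | hσ' <;> tauto

end uniformPair

theorem r1_eq_uniformPair : r1 = uniformPair σa σb := rfl

theorem r2_eq_uniformPair : r2 = uniformPair τa σb := rfl

theorem swapDist_r1 : swapDist r1 0 1 = r1 := by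
  rw [r1_eq_uniformPair, swapDist_uniformPair, uniformPair_comm]
  congr 1 <;> decide

theorem mutualReplacementIF_r1 : MutualReplacementIF dproto r1 :=
  mutualReplacementIF_dproto_of_swapDist_eq (uniformPair_nonneg σa σb) (sum_uniformPair σa σb)
    swapDist_r1

theorem tvord_r2_swapDist : TVord r2 (swapDist r2 0 1) = 1 := by
  rw [r2_eq_uniformPair, swapDist_uniformPair]
  exact tvord_uniformPair_of_disjoint _ _ (by decide)

theorem not_mutualReplacementIF_r2 : ¬ MutualReplacementIF dproto r2 := fun h => by
  have h01 := h 0 1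
  rw [tvord_r2_swapDist, show dproto 0 1 = 0 from rfl] at h01
  norm_num at h01

theorem r1_σa_ne_zero : r1 σa ≠ 0 := by
  simp [r1, show σa ≠ σb by decide]

-- In `σa = i1 ≻ j ≻ i2 ≻ k` the doctor `j` separates the cluster `{i1, i2}`.
theorem not_forall_cluster_above_r1 :
    ¬ (∀ σ : Fin 4 ≃ Fin 4, r1 σ ≠ 0 → ∀ i j : Fin 4, c i = 0 → c j = 1 → σ i < σ j) :=
  fun h => absurd (h σa r1_σa_ne_zero 1 2 rfl rfl) (by decide)

theorem not_forall_cluster_below_r1 :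
    ¬ (∀ σ : Fin 4 ≃ Fin 4, r1 σ ≠ 0 → ∀ i j : Fin 4, c i = 0 → c j = 1 → σ j < σ i) :=
  fun h => absurd (h σa r1_σa_ne_zero 0 2 rfl rfl) (by decide)

theorem not_strictIF_r1 : ¬ StrictIF r1 := fun ⟨_, hsep⟩ =>
  (hsep 0 1 (by decide)).elim not_forall_cluster_above_r1 not_forall_cluster_below_r1

/-- (a) `r¹` is mutual replacement individually fair with respect to
the proto-metric; (b) `r¹` is not strictly individually fair: for the clusters
`{i1,i2}` and `{j}`, neither cluster is ranked entirely above the other with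
probability 1; (c) `r²` is not mutual replacement individually fair:
`D_TV(r², (r²)^{i1;i2}) = 1 > 0 = d(i1,i2)`. -/
theorem mutual_replacement_IF_separated_from_strict_IF :
    MutualReplacementIF dproto r1 ∧
    ¬ StrictIF r1 ∧
    ¬ (∀ σ : Fin 4 ≃ Fin 4, r1 σ ≠ 0 →
        ∀ i j : Fin 4, c i = 0 → c j = 1 → σ i < σ j) ∧
    ¬ (∀ σ : Fin 4 ≃ Fin 4, r1 σ ≠ 0 →
        ∀ i j : Fin 4, c i = 0 → c j = 1 → σ j < σ i) ∧
    ¬ MutualReplacementIF dproto r2 ∧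
    TVord r2 (swapDist r2 0 1) = 1 ∧
    dproto 0 1 = 0 := by
  exact ⟨mutualReplacementIF_r1, not_strictIF_r1, not_forall_cluster_above_r1,
    not_forall_cluster_below_r1, not_mutualReplacementIF_r2, tvord_r2_swapDist, rfl⟩

end Stmt11
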